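/- Let λ ≥ 0 and assume L̄|[0,+∞) is proper. Then L̄'_r(λ⁺) is a limit point of the set {L̄'_r(t) : t > λ} ∩ (L̄'_r(λ⁺), +∞) (i.e. there is a sequence (λ_i) with L̄'_r(λ⁺) < L̄'_r(λ_i) < +∞ and L̄'_r(λ_i) → L̄'_r(λ⁺)) if and only if there exists λ̃ ∈ [λ, +∞) satisfying L̄'_r(λ⁺) = L̄'_r(λ̃⁺) and L̄'_r(t) > L̄'_r(λ⁺) for all t > λ̃. In that case such λ̃ is unique, λ̃ = sup{t > λ : L̄ is affine on (λ, t]}, and λ̃ = lim_i λ_i for every sequence (λ_i) as above. -/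

import Mathlib

open Filter MeasureTheory Set Topology

noncomputable section

/-- `c · log m` as an extended real number, where `m ∈ [0,∞]`. -/
def elog (c : ℝ) (m : ENNReal) : EReal := (c : EReal) * ENNReal.log m

/-- The generalized log-moment generating function `L̄` associated with the net
`(μ_α, c_α)` indexed by the filter `lf`:
`L̄(t) = limsup_α c_α · log ∫ exp(t·x/c_α) dμ_α(x)`. -/
def genLogMGF {ι : Type*} (lf : Filter ι) (μ : ι → Measure ℝ) (c : ι → ℝ) (t : ℝ) : EReal :=
  Filter.limsup
    (fun i => elog (c i) (∫⁻ x : ℝ, ENNReal.ofReal (Real.exp (t * x / c i)) ∂ (μ i))) lf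

/-- Legendre–Fenchel transform of an `EReal`-valued function on `ℝ`, evaluated at an
extended real argument: `L*(x) = sup_t (t·x − L(t))`. -/
def LegendreEE (L : ℝ → EReal) (x : EReal) : EReal := ⨆ t : ℝ, ((t : EReal) * x - L t)

open Classical in
/-- The right derivative of a convex `EReal`-valued function at `t`, with the conventions
`L'_r(t) = +∞` when `L(s) = +∞` for all `s > t` and `L'_r(t) = -∞` when `L(s) = -∞` for
some `s > t`; otherwise it is the infimum of the right difference quotients. -/
def rightDerivE (L : ℝ → EReal) (t : ℝ) : EReal :=
  if ∀ s : ℝ, t < s → L s = ⊤ then ⊤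
  else if ∃ s : ℝ, t < s ∧ L s = ⊥ then ⊥
  else ⨅ s ∈ Set.Ioi t, (L s - L t) * (((s - t)⁻¹ : ℝ) : EReal)

/-- The left derivative of a convex `EReal`-valued function at `t` (supremum of left
difference quotients). -/
def leftDerivE (L : ℝ → EReal) (t : ℝ) : EReal :=
  ⨆ s ∈ Set.Iio t, (L t - L s) * (((t - s)⁻¹ : ℝ) : EReal)

/-- Right limit at `a` of an `EReal`-valued function (as a `limsup`; it coincides with
`lim_{t→a⁺} f(t)` whenever the latter exists, e.g. for monotone or convex `f`). -/
def rightLimE (f : ℝ → EReal) (a : ℝ) : EReal := Filter.limsup f (nhdsWithin a (Set.Ioi a))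

/-- Left limit at `a` of an `EReal`-valued function (as a `limsup`; it coincides with
`lim_{t→a⁻} f(t)` whenever the latter exists). -/
def leftLimE (f : ℝ → EReal) (a : ℝ) : EReal := Filter.limsup f (nhdsWithin a (Set.Iio a))

/-- `L` is affine on the interval `(a, b]`. -/
def AffineOnIoc (L : ℝ → EReal) (a b : ℝ) : Prop :=
  ∃ p q : ℝ, ∀ s ∈ Set.Ioc a b, L s = ((p * s + q : ℝ) : EReal)

/-- `λ̃ = sup {t > λ : L is affine on (λ, t]}` (equal to `λ` if there is no such `t`). -/
def tildeOf (L : ℝ → EReal) (lam : ℝ) : ℝ :=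
  sSup (insert lam {t : ℝ | lam < t ∧ AffineOnIoc L lam t})

/-- Differentiability at `t` of an `EReal`-valued function: `L(t)` is finite and the
difference quotients converge to a (finite) real number. -/
def EDifferentiableAt (L : ℝ → EReal) (t : ℝ) : Prop :=
  (∃ r : ℝ, L t = (r : EReal)) ∧
  ∃ d : ℝ, Filter.Tendsto (fun s => (L s - L t) * (((s - t)⁻¹ : ℝ) : EReal))
    (nhdsWithin t {t}ᶜ) (nhds (d : EReal))

/-- The function `l₀(x) = − lim_{ε→0⁺} limsup_α c_α · log μ_α((x−ε, x+ε))` (the limit over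
`ε` exists by monotonicity and equals the infimum). -/
def l0fun {ι : Type*} (lf : Filter ι) (μ : ι → Measure ℝ) (c : ι → ℝ) (x : ℝ) : EReal :=
  - ⨅ ε ∈ Set.Ioi (0:ℝ),
      Filter.limsup (fun i => elog (c i) (μ i (Set.Ioo (x - ε) (x + ε)))) lf

/-- `L` restricted to `[0,∞)` is proper: `(−∞,+∞]`-valued with at least one finite value. -/
def LbarProper (L : ℝ → EReal) : Prop :=
  (∀ t : ℝ, 0 ≤ t → L t ≠ ⊥) ∧ ∃ t : ℝ, 0 ≤ t ∧ L t ≠ ⊤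

/-- `μ([x, y])` for extended-real endpoints `x, y`, with `μ` regarded as a measure on
`[-∞, +∞]`. -/
def muIccE (μ : Measure ℝ) (x y : EReal) : ENNReal :=
  μ {z : ℝ | x ≤ (z : EReal) ∧ (z : EReal) ≤ y}

/-- `μ((x, y))` for extended-real endpoints `x, y`. -/
def muIooE (μ : Measure ℝ) (x y : EReal) : ENNReal :=
  μ {z : ℝ | x < (z : EReal) ∧ (z : EReal) < y}

open Classical in
/-- The Legendre transform extended to `[-∞,+∞]` by continuity, with the paper's
convention `L̄*(−∞) = −L̄(0⁺)`. -/
def LegendreExt (L : ℝ → EReal) (x : EReal) : EReal :=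
  if x = ⊥ then -(rightLimE L 0) else if x = ⊤ then ⊤ else LegendreEE L x

end

/-! By Hölder's inequality `L̄` is convex, so on `[0, ∞)` its right derivative `D` is
nondecreasing and `D(λ⁺) = inf_{t > λ} D(t)`. For a sequence `u` as in the statement, monotonicity
of `D` shows that `λ̃ := inf_n u_n` is not attained, hence `D = D(λ⁺)` on `(λ, λ̃]`, `D > D(λ⁺)`
beyond `λ̃`, and `u_n → λ̃`. Conversely, from such a `λ̃` the points `λ̃ + (b - λ̃)/(n + 1)`, with
`D(b) < ∞`, form such a sequence. Finally, `D` is constant and finite on `(λ, λ̃]` exactly when `L̄`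
is affine there, which identifies `λ̃` with `tildeOf L̄ λ`. -/

section GenLogMGF

variable {ι : Type*} (lf : Filter ι) (μ : ι → Measure ℝ) (c : ι → ℝ)

theorem genLogMGF_zero [lf.NeBot] [∀ i, IsProbabilityMeasure (μ i)] : genLogMGF lf μ c 0 = 0 := by
  simp [genLogMGF, elog]

theorem elog_integral_exp_convex {c : ℝ} (hc : 0 < c) (ν : Measure ℝ) {a b : ℝ} (ha : 0 ≤ a)
    (hb : 0 ≤ b) (hab : a + b = 1) (x y : ℝ) :
    elog c (∫⁻ z, ENNReal.ofReal (Real.exp ((a * x + b * y) * z / c)) ∂ν) ≤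
      a * elog c (∫⁻ z, ENNReal.ofReal (Real.exp (x * z / c)) ∂ν) +
        b * elog c (∫⁻ z, ENNReal.ofReal (Real.exp (y * z / c)) ∂ν) := by
  have hmeas (t : ℝ) : Measurable fun z : ℝ => ENNReal.ofReal (Real.exp (t * z / c)) := by
    fun_prop
  have hsplit (z : ℝ) : ENNReal.ofReal (Real.exp ((a * x + b * y) * z / c)) =
      ENNReal.ofReal (Real.exp (x * z / c)) ^ a * ENNReal.ofReal (Real.exp (y * z / c)) ^ b := by
    rw [ENNReal.ofReal_rpow_of_pos (Real.exp_pos _), ENNReal.ofReal_rpow_of_pos (Real.exp_pos _),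
      ← Real.exp_mul, ← Real.exp_mul, ← ENNReal.ofReal_mul (Real.exp_nonneg _), ← Real.exp_add]
    ring_nf
  have holder := ENNReal.lintegral_mul_norm_pow_le (μ := ν) (hmeas x).aemeasurable
    (hmeas y).aemeasurable ha hb hab
  simp_rw [← hsplit] at holder
  calc elog c (∫⁻ z, ENNReal.ofReal (Real.exp ((a * x + b * y) * z / c)) ∂ν)
      ≤ (c : EReal) * (a * ENNReal.log (∫⁻ z, ENNReal.ofReal (Real.exp (x * z / c)) ∂ν) +
          b * ENNReal.log (∫⁻ z, ENNReal.ofReal (Real.exp (y * z / c)) ∂ν)) := by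
        rw [← ENNReal.log_rpow, ← ENNReal.log_rpow, ← ENNReal.log_mul_add]
        exact mul_le_mul_of_nonneg_left (ENNReal.log_monotone holder) (by exact_mod_cast hc.le)
    _ = _ := by
        rw [EReal.left_distrib_of_nonneg_of_ne_top (by exact_mod_cast hc.le) (EReal.coe_ne_top c),
          mul_left_comm, mul_left_comm (c : EReal)]
        rfl

theorem genLogMGF_convex_comb_le [lf.NeBot] (hc : ∀ i, 0 < c i) {a b : ℝ} (ha : 0 ≤ a)
    (hb : 0 ≤ b) (hab : a + b = 1) {x y : ℝ} (hx : genLogMGF lf μ c x ≠ ⊥)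
    (hy : genLogMGF lf μ c y ≠ ⊥) :
    genLogMGF lf μ c (a * x + b * y) ≤ a * genLogMGF lf μ c x + b * genLogMGF lf μ c y := by
  have coe_mul_ne_bot {r : ℝ} (hr : 0 ≤ r) {z : EReal} (hz : z ≠ ⊥) : (r : EReal) * z ≠ ⊥ :=
    (EReal.mul_ne_bot _ _).2 ⟨.inl (EReal.coe_ne_bot r), .inr hz, .inl (EReal.coe_ne_top r),
      .inl (EReal.coe_nonneg.2 hr)⟩
  have coe_limsup {r : ℝ} (hr : 0 ≤ r) (u : ι → EReal) :
      limsup (fun i => (r : EReal) * u i) lf = r * limsup u lf :=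
    EReal.limsup_const_mul_of_nonneg_of_ne_top (EReal.coe_nonneg.2 hr) (EReal.coe_ne_top r)
  unfold genLogMGF at *
  calc _ ≤ limsup ((fun i => (a : EReal) *
              elog (c i) (∫⁻ z, ENNReal.ofReal (Real.exp (x * z / c i)) ∂μ i)) +
            fun i => (b : EReal) *
              elog (c i) (∫⁻ z, ENNReal.ofReal (Real.exp (y * z / c i)) ∂μ i)) lf :=
        limsup_le_limsup (.of_forall fun i => elog_integral_exp_convex (hc i) (μ i) ha hb hab x y)
    _ ≤ _ := by
        refine (EReal.limsup_add_le ?_ ?_).trans_eq ?_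
        · exact .inl (coe_limsup ha _ ▸ coe_mul_ne_bot ha hx)
        · exact .inr (coe_limsup hb _ ▸ coe_mul_ne_bot hb hy)
        · rw [coe_limsup ha, coe_limsup hb]

theorem convexOn_toReal_of_convex_comb_le {L : ℝ → EReal} {s : Set ℝ} (hs : Convex ℝ s)
    (hbot : ∀ t ∈ s, L t ≠ ⊥)
    (hL : ∀ x ∈ s, ∀ y ∈ s, ∀ a b : ℝ, 0 ≤ a → 0 ≤ b → a + b = 1 →
      L (a * x + b * y) ≤ a * L x + b * L y) :
    ConvexOn ℝ {t ∈ s | L t ≠ ⊤} (fun t => (L t).toReal) := by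
  have key : ∀ ⦃x⦄, x ∈ {t ∈ s | L t ≠ ⊤} → ∀ ⦃y⦄, y ∈ {t ∈ s | L t ≠ ⊤} → ∀ ⦃a b : ℝ⦄,
      0 ≤ a → 0 ≤ b → a + b = 1 → a • x + b • y ∈ s ∧
        L (a • x + b • y) ≤ ((a * (L x).toReal + b * (L y).toReal : ℝ) : EReal) := by
    intro x hx y hy a b ha hb hab
    refine ⟨hs hx.1 hy.1 ha hb hab, ?_⟩
    have h := hL x hx.1 y hy.1 a b ha hb hab
    rwa [← EReal.coe_toReal hx.2 (hbot x hx.1), ← EReal.coe_toReal hy.2 (hbot y hy.1)] at h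
  refine ⟨fun x hx y hy a b ha hb hab => ?_, fun x hx y hy a b ha hb hab => ?_⟩
  · obtain ⟨hmem, hle⟩ := key hx hy ha hb hab
    exact ⟨hmem, ne_top_of_le_ne_top (EReal.coe_ne_top _) hle⟩
  · obtain ⟨hmem, hle⟩ := key hx hy ha hb hab
    have h := EReal.toReal_le_toReal hle (hbot _ hmem) (EReal.coe_ne_top _)
    rwa [EReal.toReal_coe] at h

theorem convexOn_genLogMGF [lf.NeBot] (hc : ∀ i, 0 < c i) {s : Set ℝ} (hs : Convex ℝ s)
    (hbot : ∀ t ∈ s, genLogMGF lf μ c t ≠ ⊥) :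
    ConvexOn ℝ {t ∈ s | genLogMGF lf μ c t ≠ ⊤} (fun t => (genLogMGF lf μ c t).toReal) :=
  convexOn_toReal_of_convex_comb_le hs hbot fun x hx y hy _ _ ha hb hab =>
    genLogMGF_convex_comb_le lf μ c hc ha hb hab (hbot x hx) (hbot y hy)

end GenLogMGF

/-- A convex `EReal`-valued function on `[0, ∞)` that never takes the value `⊥` and is finite at
`0`, expressed through the real convex function on its effective domain. -/
structure ProperConvexOnNonneg (L : ℝ → EReal) : Prop where
  ne_bot : ∀ t, 0 ≤ t → L t ≠ ⊥
  zero_ne_top : L 0 ≠ ⊤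
  convexOn : ConvexOn ℝ {t ∈ Ici 0 | L t ≠ ⊤} (fun t => (L t).toReal)

noncomputable def eslope (L : ℝ → EReal) (t s : ℝ) : EReal :=
  (L s - L t) * (((s - t)⁻¹ : ℝ) : EReal)

namespace ProperConvexOnNonneg

variable {L : ℝ → EReal} {a b p t s : ℝ}

theorem ne_top_of_le (hL : ProperConvexOnNonneg L) (ht : 0 ≤ t) (hts : t ≤ s) (hs : L s ≠ ⊤) :
    L t ≠ ⊤ := by
  have hdom := hL.convexOn.1.ordConnected.out
    (⟨Set.self_mem_Ici, hL.zero_ne_top⟩ : (0 : ℝ) ∈ {t ∈ Ici 0 | L t ≠ ⊤}) ⟨ht.trans hts, hs⟩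
  exact (hdom ⟨ht, hts⟩).2

theorem eslope_eq_coe (hL : ProperConvexOnNonneg L) (ht : 0 ≤ t) (hs : 0 ≤ s) (htT : L t ≠ ⊤)
    (hsT : L s ≠ ⊤) : eslope L t s = (((L s).toReal - (L t).toReal) / (s - t) : ℝ) := by
  rw [eslope, ← EReal.coe_toReal htT (hL.ne_bot t ht), ← EReal.coe_toReal hsT (hL.ne_bot s hs),
    div_eq_mul_inv]
  norm_cast

theorem eslope_eq_top (hL : ProperConvexOnNonneg L) (ht : 0 ≤ t) (hts : t < s) (htT : L t ≠ ⊤)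
    (hsT : L s = ⊤) : eslope L t s = ⊤ := by
  rw [eslope, hsT, ← EReal.coe_toReal htT (hL.ne_bot t ht), EReal.top_sub_coe,
    EReal.top_mul_coe_of_pos (inv_pos.2 (sub_pos.2 hts))]

theorem eslope_le_eslope (hL : ProperConvexOnNonneg L) (ha : 0 ≤ a) (hat : a < t) (hts : t < s)
    (htT : L t ≠ ⊤) : eslope L a t ≤ eslope L t s := by
  have ht := ha.trans hat.le
  by_cases hsT : L s = ⊤
  · rw [hL.eslope_eq_top ht hts htT hsT]
    exact le_top
  have haT := hL.ne_top_of_le ha hat.le htT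
  rw [hL.eslope_eq_coe ha ht haT htT, hL.eslope_eq_coe ht (ht.trans hts.le) htT hsT]
  exact EReal.coe_le_coe_iff.2 <|
    hL.convexOn.slope_mono_adjacent ⟨ha, haT⟩ ⟨ht.trans hts.le, hsT⟩ hat hts

theorem rightDerivE_eq_top (hL : ProperConvexOnNonneg L) (ht : 0 ≤ t) (htT : L t = ⊤) :
    rightDerivE L t = ⊤ :=
  if_pos fun _ hts => by_contra fun hsT => hL.ne_top_of_le ht hts.le hsT htT

theorem rightDerivE_eq_iInf (hL : ProperConvexOnNonneg L) (ht : 0 ≤ t) (htT : L t ≠ ⊤) :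
    rightDerivE L t = ⨅ s ∈ Ioi t, eslope L t s := by
  unfold rightDerivE
  split_ifs with hall hbot
  · refine (iInf₂_eq_top.2 fun u hu => ?_).symm
    exact hL.eslope_eq_top ht hu htT (hall u hu)
  · obtain ⟨s, hts, hs⟩ := hbot
    exact absurd hs (hL.ne_bot s (ht.trans hts.le))
  · rfl

theorem rightDerivE_le_eslope (hL : ProperConvexOnNonneg L) (ht : 0 ≤ t) (hts : t < s)
    (htT : L t ≠ ⊤) : rightDerivE L t ≤ eslope L t s :=
  hL.rightDerivE_eq_iInf ht htT ▸ iInf₂_le s hts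

theorem eslope_le_rightDerivE (hL : ProperConvexOnNonneg L) (ha : 0 ≤ a) (hat : a < t)
    (htT : L t ≠ ⊤) : eslope L a t ≤ rightDerivE L t :=
  hL.rightDerivE_eq_iInf (ha.trans hat.le) htT ▸
    le_iInf₂ fun _ hts => hL.eslope_le_eslope ha hat hts htT

theorem monotoneOn_rightDerivE (hL : ProperConvexOnNonneg L) :
    MonotoneOn (rightDerivE L) (Ici 0) := by
  intro t ht s _ hts
  rcases hts.eq_or_lt with rfl | hts
  · exact le_rfl
  by_cases hsT : L s = ⊤
  · exact (hL.rightDerivE_eq_top (ht.trans hts.le) hsT).symm ▸ le_top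
  have htT := hL.ne_top_of_le ht hts.le hsT
  exact (hL.rightDerivE_le_eslope ht hts htT).trans (hL.eslope_le_rightDerivE ht hts hsT)

theorem rightDerivE_ne_bot (hL : ProperConvexOnNonneg L) (ht : 0 < t) (htT : L t ≠ ⊤) :
    rightDerivE L t ≠ ⊥ := by
  have h := hL.eslope_le_rightDerivE le_rfl ht htT
  rw [hL.eslope_eq_coe le_rfl ht.le hL.zero_ne_top htT] at h
  exact ne_bot_of_le_ne_bot (EReal.coe_ne_bot _) h

theorem rightDerivE_eq_of_affine (hL : ProperConvexOnNonneg L) (ha : 0 ≤ a) {q : ℝ}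
    (haff : ∀ s ∈ Ioc a b, L s = ((p * s + q : ℝ) : EReal)) :
    ∀ s ∈ Ioo a b, rightDerivE L s = p := by
  have hslope : ∀ u ∈ Ioc a b, ∀ v ∈ Ioc a b, u < v → eslope L u v = p := by
    intro u hu v hv huv
    rw [eslope, haff u hu, haff v hv, ← EReal.coe_sub, ← EReal.coe_mul, EReal.coe_eq_coe_iff]
    field_simp [(sub_pos.2 huv).ne']
    ring
  intro s ⟨has, hsb⟩
  have hs : s ∈ Ioc a b := ⟨has, hsb.le⟩
  have hsT : L s ≠ ⊤ := haff s hs ▸ EReal.coe_ne_top _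
  have hm : (a + s) / 2 ∈ Ioc a b := ⟨by linarith, by linarith⟩
  refine le_antisymm ?_ ?_
  · exact hslope s hs b ⟨has.trans hsb, le_rfl⟩ hsb ▸
      hL.rightDerivE_le_eslope (ha.trans has.le) hsb hsT
  · exact hslope _ hm s hs (by linarith) ▸
      hL.eslope_le_rightDerivE (ha.trans hm.1.le) (by linarith) hsT

theorem affineOnIoc_of_rightDerivE_eq (hL : ProperConvexOnNonneg L) (ha : 0 ≤ a) (hab : a < b)
    (hD : ∀ s ∈ Ioc a b, rightDerivE L s = rightDerivE L b) (hDb : rightDerivE L b ≠ ⊤) :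
    AffineOnIoc L a b := by
  have hbT : L b ≠ ⊤ := fun h => hDb (hL.rightDerivE_eq_top (ha.trans hab.le) h)
  set p := (rightDerivE L b).toReal
  have hp : rightDerivE L b = p :=
    (EReal.coe_toReal hDb (hL.rightDerivE_ne_bot (ha.trans_lt hab) hbT)).symm
  refine ⟨p, (L b).toReal - p * b, fun s ⟨has, hsb⟩ => ?_⟩
  have hs : 0 ≤ s := ha.trans has.le
  have hsT := hL.ne_top_of_le hs hsb hbT
  rw [← EReal.coe_toReal hsT (hL.ne_bot s hs), EReal.coe_eq_coe_iff]
  rcases hsb.eq_or_lt with rfl | hsb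
  · ring
  have hslope : eslope L s b = p := le_antisymm
    (hp ▸ hL.eslope_le_rightDerivE hs hsb hbT)
    (hp ▸ hD s ⟨has, hsb.le⟩ ▸ hL.rightDerivE_le_eslope hs hsb hsT)
  rw [hL.eslope_eq_coe hs (hs.trans hsb.le) hsT hbT, EReal.coe_eq_coe_iff,
    div_eq_iff (sub_pos.2 hsb).ne'] at hslope
  linarith

end ProperConvexOnNonneg

def IsFlatEnd (f : ℝ → EReal) (lam ℓ : ℝ) : Prop :=
  lam ≤ ℓ ∧ rightLimE f ℓ = rightLimE f lam ∧ ∀ t, ℓ < t → rightLimE f lam < f t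

namespace MonotoneOn

variable {f : ℝ → EReal} {a lam ℓ t : ℝ}

theorem tendsto_rightLimE (hf : MonotoneOn f (Ioi a)) :
    Tendsto f (𝓝[>] a) (𝓝 (rightLimE f a)) := by
  have h := hf.tendsto_nhdsGT (OrderBot.bddBelow _)
  rwa [rightLimE, h.limsup_eq]

theorem rightLimE_eq_iInf (hf : MonotoneOn f (Ioi a)) : rightLimE f a = ⨅ t ∈ Ioi a, f t := by
  rw [rightLimE, (hf.tendsto_nhdsGT (OrderBot.bddBelow _)).limsup_eq, sInf_image]

theorem rightLimE_le (hf : MonotoneOn f (Ioi a)) (ht : a < t) : rightLimE f a ≤ f t :=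
  hf.rightLimE_eq_iInf ▸ iInf₂_le t ht

theorem iInf_lt_of_tendsto_rightLimE {u : ℕ → ℝ} (hf : MonotoneOn f (Ioi lam))
    (hu : ∀ n, lam < u n) (hlt : ∀ n, rightLimE f lam < f (u n))
    (hlim : Tendsto (fun n => f (u n)) atTop (𝓝 (rightLimE f lam))) (n : ℕ) :
    ⨅ m, u m < u n := by
  obtain ⟨m, hm⟩ := (hlim.eventually (gt_mem_nhds (hlt n))).exists
  exact (ciInf_le ⟨lam, forall_mem_range.2 fun m => (hu m).le⟩ m).trans_lt
    (hf.reflect_lt (hu m) (hu n) hm)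

theorem isFlatEnd_iInf_of_tendsto_rightLimE {u : ℕ → ℝ} (hf : MonotoneOn f (Ioi lam))
    (hu : ∀ n, lam < u n) (hlt : ∀ n, rightLimE f lam < f (u n))
    (hlim : Tendsto (fun n => f (u n)) atTop (𝓝 (rightLimE f lam))) :
    IsFlatEnd f lam (⨅ n, u n) := by
  have hlam : lam ≤ ⨅ n, u n := le_ciInf fun n => (hu n).le
  have hfℓ : MonotoneOn f (Ioi (⨅ n, u n)) := hf.mono (Ioi_subset_Ioi hlam)
  refine ⟨hlam, le_antisymm ?_ ?_, fun t ht => ?_⟩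
  · rw [hfℓ.rightLimE_eq_iInf]
    exact ge_of_tendsto' hlim fun n =>
      iInf₂_le (u n) (hf.iInf_lt_of_tendsto_rightLimE hu hlt hlim n)
  · rw [hfℓ.rightLimE_eq_iInf]
    exact le_iInf₂ fun t ht => hf.rightLimE_le (hlam.trans_lt ht)
  · obtain ⟨n, hn⟩ := exists_lt_of_ciInf_lt ht
    exact (hlt n).trans_le (hf (hu n) ((hu n).trans hn) hn.le)

theorem tendsto_iInf_of_tendsto_rightLimE {u : ℕ → ℝ} (hf : MonotoneOn f (Ioi lam))
    (hu : ∀ n, lam < u n) (hlt : ∀ n, rightLimE f lam < f (u n))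
    (hlim : Tendsto (fun n => f (u n)) atTop (𝓝 (rightLimE f lam))) :
    Tendsto u atTop (𝓝 (⨅ n, u n)) := by
  refine tendsto_order.2 ⟨fun b hb => .of_forall fun n =>
    hb.trans (hf.iInf_lt_of_tendsto_rightLimE hu hlt hlim n), fun b hb => ?_⟩
  have hflat := hf.isFlatEnd_iInf_of_tendsto_rightLimE hu hlt hlim
  filter_upwards [hlim.eventually (gt_mem_nhds (hflat.2.2 b hb))] with n hn
  exact hf.reflect_lt (hu n) (hflat.1.trans_lt hb) hn

theorem exists_seq_of_isFlatEnd (hf : MonotoneOn f (Ioi lam)) (h : IsFlatEnd f lam ℓ) :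
    ∃ u : ℕ → ℝ, (∀ n, lam < u n) ∧ (∀ n, rightLimE f lam < f (u n) ∧ f (u n) ≠ ⊤) ∧
      Tendsto (fun n => f (u n)) atTop (𝓝 (rightLimE f lam)) := by
  obtain ⟨hlam, hlim, hgt⟩ := h
  have hfℓ : MonotoneOn f (Ioi ℓ) := hf.mono (Ioi_subset_Ioi hlam)
  obtain ⟨b, hb, hbT⟩ : ∃ b, ℓ < b ∧ f b < ⊤ := by
    have : rightLimE f ℓ < ⊤ := hlim ▸ (hgt (ℓ + 1) (by linarith)).trans_le le_top
    simpa only [hfℓ.rightLimE_eq_iInf, iInf_lt_iff, exists_prop, mem_Ioi] using this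
  set u : ℕ → ℝ := fun n => ℓ + (b - ℓ) / (n + 1)
  have hu (n : ℕ) : u n ∈ Ioc ℓ b := by
    have hpos : 0 < b - ℓ := sub_pos.2 hb
    refine ⟨lt_add_of_pos_right ℓ (by positivity), ?_⟩
    have : (b - ℓ) / (n + 1) ≤ b - ℓ := div_le_self hpos.le (by linarith [n.cast_nonneg (α := ℝ)])
    linarith
  have hu_lim : Tendsto u atTop (𝓝[>] ℓ) := by
    refine tendsto_nhdsWithin_iff.2 ⟨?_, .of_forall fun n => (hu n).1⟩
    simpa [u, div_eq_mul_inv] using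
      tendsto_const_nhds.add (tendsto_one_div_add_atTop_nhds_zero_nat.const_mul (b - ℓ))
  refine ⟨u, fun n => hlam.trans_lt (hu n).1,
    fun n => ⟨hgt _ (hu n).1, ((hfℓ (hu n).1 hb (hu n).2).trans_lt hbT).ne⟩, ?_⟩
  rw [← hlim]
  exact hfℓ.tendsto_rightLimE.comp hu_lim

end MonotoneOn

theorem ProperConvexOnNonneg.tildeOf_eq {L : ℝ → EReal} (hL : ProperConvexOnNonneg L) {lam ℓ : ℝ}
    (hlam : 0 ≤ lam) (h : IsFlatEnd (rightDerivE L) lam ℓ) : tildeOf L lam = ℓ := by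
  obtain ⟨hle, hlim, hgt⟩ := h
  have hD : MonotoneOn (rightDerivE L) (Ioi lam) :=
    hL.monotoneOn_rightDerivE.mono (Ioi_subset_Ici hlam)
  refine IsGreatest.csSup_eq ⟨?_, ?_⟩
  · rcases hle.eq_or_lt with rfl | hlt
    · exact mem_insert _ _
    have hflat : ∀ s ∈ Ioc lam ℓ, rightDerivE L s = rightLimE (rightDerivE L) lam := by
      intro s ⟨hs, hsℓ⟩
      refine le_antisymm ?_ (hD.rightLimE_le hs)
      rw [← hlim, (hD.mono (Ioi_subset_Ioi hle)).rightLimE_eq_iInf]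
      exact le_iInf₂ fun t ht => hD hs (hs.trans (hsℓ.trans_lt ht)) (hsℓ.trans ht.le)
    have hDℓ : rightDerivE L ℓ ≠ ⊤ :=
      hflat ℓ ⟨hlt, le_rfl⟩ ▸ ((hgt (ℓ + 1) (by linarith)).trans_le le_top).ne
    refine mem_insert_of_mem _ ⟨hlt, hL.affineOnIoc_of_rightDerivE_eq hlam hlt
      (fun s hs => (hflat s hs).trans (hflat ℓ ⟨hlt, le_rfl⟩).symm) hDℓ⟩
  · rintro x (rfl | ⟨hx, p, q, haff⟩)
    · exact hle
    by_contra! hℓx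
    have hDp := hL.rightDerivE_eq_of_affine hlam haff
    have hA : rightLimE (rightDerivE L) lam = p :=
      tendsto_nhds_unique hD.tendsto_rightLimE <| tendsto_const_nhds.congr' <|
        eventuallyEq_of_mem (Ioo_mem_nhdsGT hx) fun s hs => (hDp s hs).symm
    have hs : (ℓ + x) / 2 ∈ Ioo lam x := ⟨by linarith, by linarith⟩
    have := hgt _ (by linarith : ℓ < (ℓ + x) / 2)
    rw [hDp _ hs, hA] at this
    exact lt_irrefl _ this

theorem statement9_general
    {ι : Type*} (lf : Filter ι) [lf.NeBot]
    (μ : ι → Measure ℝ) [∀ i, IsProbabilityMeasure (μ i)]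
    (c : ι → ℝ) (hc : ∀ i, 0 < c i)
    (L : ℝ → EReal) (hL : L = genLogMGF lf μ c)
    (lam : ℝ) (hlam : 0 ≤ lam) (hp : LbarProper L) :
    ((∃ u : ℕ → ℝ, (∀ n, lam < u n) ∧
      (∀ n, rightLimE (rightDerivE L) lam < rightDerivE L (u n) ∧ rightDerivE L (u n) ≠ ⊤) ∧
      Filter.Tendsto (fun n => rightDerivE L (u n)) Filter.atTop (nhds (rightLimE (rightDerivE L) lam))) ↔
      (∃ lt : ℝ, lam ≤ lt ∧ rightLimE (rightDerivE L) lt = rightLimE (rightDerivE L) lam ∧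
        ∀ t : ℝ, lt < t → rightLimE (rightDerivE L) lam < rightDerivE L t)) ∧
    (∀ lt : ℝ, lam ≤ lt → rightLimE (rightDerivE L) lt = rightLimE (rightDerivE L) lam →
      (∀ t : ℝ, lt < t → rightLimE (rightDerivE L) lam < rightDerivE L t) → lt = tildeOf L lam) ∧
    (∀ u : ℕ → ℝ, (∀ n, lam < u n) →
      (∀ n, rightLimE (rightDerivE L) lam < rightDerivE L (u n) ∧ rightDerivE L (u n) ≠ ⊤) →
      Filter.Tendsto (fun n => rightDerivE L (u n)) Filter.atTop (nhds (rightLimE (rightDerivE L) lam)) →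
      Filter.Tendsto u Filter.atTop (nhds (tildeOf L lam))) := by
  subst hL
  have hconv : ProperConvexOnNonneg (genLogMGF lf μ c) :=
    ⟨hp.1, (genLogMGF_zero lf μ c).symm ▸ EReal.zero_ne_top,
      convexOn_genLogMGF lf μ c hc (convex_Ici 0) hp.1⟩
  have hD : MonotoneOn (rightDerivE (genLogMGF lf μ c)) (Ioi lam) :=
    hconv.monotoneOn_rightDerivE.mono (Ioi_subset_Ici hlam)
  refine ⟨⟨fun ⟨u, hu, hlt, hlim⟩ => ⟨_, hD.isFlatEnd_iInf_of_tendsto_rightLimE hu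
      (fun n => (hlt n).1) hlim⟩, fun ⟨_, h⟩ => hD.exists_seq_of_isFlatEnd h⟩,
    fun _ hle hlim hgt => (hconv.tildeOf_eq hlam ⟨hle, hlim, hgt⟩).symm,
    fun u hu hlt hlim => ?_⟩
  rw [hconv.tildeOf_eq hlam
    (hD.isFlatEnd_iInf_of_tendsto_rightLimE hu (fun n => (hlt n).1) hlim)]
  exact hD.tendsto_iInf_of_tendsto_rightLimE hu (fun n => (hlt n).1) hlim

theorem statement9
    {ι : Type*} (lf : Filter ι) [lf.NeBot]
    (μ : ι → Measure ℝ) [∀ i, IsProbabilityMeasure (μ i)]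
    (c : ι → ℝ) (hc : ∀ i, 0 < c i) (hc0 : Filter.Tendsto c lf (nhds (0 : ℝ)))
    (L : ℝ → EReal) (hL : L = genLogMGF lf μ c)
    (lam : ℝ) (hlam : 0 ≤ lam) (hp : LbarProper L) :
    ((∃ u : ℕ → ℝ, (∀ n, lam < u n) ∧
      (∀ n, rightLimE (rightDerivE L) lam < rightDerivE L (u n) ∧ rightDerivE L (u n) ≠ ⊤) ∧
      Filter.Tendsto (fun n => rightDerivE L (u n)) Filter.atTop (nhds (rightLimE (rightDerivE L) lam))) ↔
      (∃ lt : ℝ, lam ≤ lt ∧ rightLimE (rightDerivE L) lt = rightLimE (rightDerivE L) lam ∧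
        ∀ t : ℝ, lt < t → rightLimE (rightDerivE L) lam < rightDerivE L t)) ∧
    (∀ lt : ℝ, lam ≤ lt → rightLimE (rightDerivE L) lt = rightLimE (rightDerivE L) lam →
      (∀ t : ℝ, lt < t → rightLimE (rightDerivE L) lam < rightDerivE L t) → lt = tildeOf L lam) ∧
    (∀ u : ℕ → ℝ, (∀ n, lam < u n) →
      (∀ n, rightLimE (rightDerivE L) lam < rightDerivE L (u n) ∧ rightDerivE L (u n) ≠ ⊤) →
      Filter.Tendsto (fun n => rightDerivE L (u n)) Filter.atTop (nhds (rightLimE (rightDerivE L) lam)) →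
      Filter.Tendsto u Filter.atTop (nhds (tildeOf L lam))) :=
  statement9_general lf μ c hc L hL lam hlam hp
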